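/- arXiv:1809.04456 — 11 statements merged into one kernel-verified Lean document; each statement's English description precedes it below -/
import Mathlib

section
/- Let M be a non-trivial complete lattice, S a non-empty set, and A, B bounded subposets of M^S. Let P : A → M^S and T : B → M^S be order-preserving maps such that P(a) ≤ b iff a ≤ T(b) for all a ∈ A, b ∈ B. Define R_T = {(s,t) ∈ S×S : ∀b ∈ B, T(b)(s) ≤ b(t)} and R^P = {(s,t) ∈ S×S : ∀a ∈ A, a(s) ≤ P(a)(t)}. If P(A) ⊆ B, then R_T ⊆ R^P. -/
theorem stmt4_general {M S : Type*} [CompleteLattice M]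
    (A B : Set (S → M))
    (P T : (S → M) → (S → M))
    (galois : ∀ a ∈ A, ∀ b ∈ B, (P a ≤ b ↔ a ≤ T b))
    (hPA : ∀ a ∈ A, P a ∈ B) :
    {p : S × S | ∀ b ∈ B, T b p.1 ≤ b p.2} ⊆
      {p : S × S | ∀ a ∈ A, a p.1 ≤ P a p.2} := by
  rintro ⟨s, t⟩ hst a ha
  have unit_le : a ≤ T (P a) := (galois a ha (P a) (hPA a ha)).mp le_rfl
  exact (unit_le s).trans (hst (P a) (hPA a ha))

/-- Given a Galois pair P : A → M^S, T : B → M^S of order-preserving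
maps, if P(A) ⊆ B then the upper T-induced relation R_T is contained in the lower
P-induced relation R^P. -/
theorem stmt4 {M S : Type*} [CompleteLattice M] (hM : (⊥ : M) ≠ ⊤) [Nonempty S]
    (A B : Set (S → M))
    (hA0 : (fun _ => (⊥ : M)) ∈ A) (hA1 : (fun _ => (⊤ : M)) ∈ A)
    (hB0 : (fun _ => (⊥ : M)) ∈ B) (hB1 : (fun _ => (⊤ : M)) ∈ B)
    (P T : (S → M) → (S → M))
    (hP : ∀ a ∈ A, ∀ a' ∈ A, a ≤ a' → P a ≤ P a')
    (hT : ∀ b ∈ B, ∀ b' ∈ B, b ≤ b' → T b ≤ T b')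
    (galois : ∀ a ∈ A, ∀ b ∈ B, (P a ≤ b ↔ a ≤ T b))
    (hPA : ∀ a ∈ A, P a ∈ B) :
    {p : S × S | ∀ b ∈ B, T b p.1 ≤ b p.2} ⊆
      {p : S × S | ∀ a ∈ A, a p.1 ≤ P a p.2} :=
  stmt4_general A B P T galois hPA
end

section
/- Let M be a non-trivial complete lattice, S a non-empty set, and A, B bounded subposets of M^S. Let P : A → M^S and T : B → M^S be order-preserving maps such that P(a) ≤ b iff a ≤ T(b) for all a ∈ A, b ∈ B. Define R_T = {(s,t) : ∀b ∈ B, T(b)(s) ≤ b(t)} and R^P = {(s,t) : ∀a ∈ A, a(s) ≤ P(a)(t)}. If T(B) ⊆ A, then R^P ⊆ R_T. -/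
/-- Given a Galois pair P : A → M^S, T : B → M^S of order-preserving
maps, if T(B) ⊆ A then R^P ⊆ R_T. -/
theorem stmt5 {M S : Type*} [CompleteLattice M] (hM : (⊥ : M) ≠ ⊤) [Nonempty S]
    (A B : Set (S → M))
    (hA0 : (fun _ => (⊥ : M)) ∈ A) (hA1 : (fun _ => (⊤ : M)) ∈ A)
    (hB0 : (fun _ => (⊥ : M)) ∈ B) (hB1 : (fun _ => (⊤ : M)) ∈ B)
    (P T : (S → M) → (S → M))
    (hP : ∀ a ∈ A, ∀ a' ∈ A, a ≤ a' → P a ≤ P a')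
    (hT : ∀ b ∈ B, ∀ b' ∈ B, b ≤ b' → T b ≤ T b')
    (galois : ∀ a ∈ A, ∀ b ∈ B, (P a ≤ b ↔ a ≤ T b))
    (hTB : ∀ b ∈ B, T b ∈ A) :
    {p : S × S | ∀ a ∈ A, a p.1 ≤ P a p.2} ⊆
      {p : S × S | ∀ b ∈ B, T b p.1 ≤ b p.2} := by
  intro p hp b hb
  calc T b p.1 ≤ P (T b) p.2 := hp _ (hTB b hb)
    _ ≤ b p.2 := ((galois (T b) (hTB b hb) b hb).mpr le_rfl) p.2
end

section
/- Let M be a non-trivial complete lattice, S a non-empty set, and A, B bounded subposets of M^S. Let P : A → M^S and T : B → M^S be order-preserving maps satisfying the Galois condition P(a) ≤ b iff a ≤ T(b) for all a ∈ A, b ∈ B. If P(A) ⊆ B and T(B) ⊆ A, then the upper T-induced relation R_T equals the lower P-induced relation R^P. -/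
/-- Given a Galois pair P : A → M^S, T : B → M^S of order-preserving
maps, if P(A) ⊆ B and T(B) ⊆ A then R_T = R^P. -/
theorem stmt6 {M S : Type*} [CompleteLattice M] (hM : (⊥ : M) ≠ ⊤) [Nonempty S]
    (A B : Set (S → M))
    (hA0 : (fun _ => (⊥ : M)) ∈ A) (hA1 : (fun _ => (⊤ : M)) ∈ A)
    (hB0 : (fun _ => (⊥ : M)) ∈ B) (hB1 : (fun _ => (⊤ : M)) ∈ B)
    (P T : (S → M) → (S → M))
    (hP : ∀ a ∈ A, ∀ a' ∈ A, a ≤ a' → P a ≤ P a')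
    (hT : ∀ b ∈ B, ∀ b' ∈ B, b ≤ b' → T b ≤ T b')
    (galois : ∀ a ∈ A, ∀ b ∈ B, (P a ≤ b ↔ a ≤ T b))
    (hPA : ∀ a ∈ A, P a ∈ B) (hTB : ∀ b ∈ B, T b ∈ A) :
    {p : S × S | ∀ b ∈ B, T b p.1 ≤ b p.2} =
      {p : S × S | ∀ a ∈ A, a p.1 ≤ P a p.2} := by
  ext ⟨s, t⟩
  simp only [Set.mem_setOf_eq]
  constructor
  · intro h a ha
    have h1 : a ≤ T (P a) := (galois a ha (P a) (hPA a ha)).mp le_rfl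
    exact le_trans (h1 s) (h (P a) (hPA a ha))
  · intro h b hb
    have h1 : P (T b) ≤ b := (galois (T b) (hTB b hb) b hb).mpr le_rfl
    exact le_trans (h (T b) (hTB b hb)) (h1 t)
end

section
/- Let M be a non-trivial complete lattice, (S, R) a transition frame, B a bounded subposet of M^S, and T_R : B → M^S the map T_R(b)(s) = ⋀{ b(t) : s R t }. Suppose for every t ∈ S there exists b^t ∈ B such that for all s ∈ S with (s,t) ∉ R, one has ⋀{ b^t(u) : s R u } ≰ b^t(t) and b^t(t) ≠ 1. Then R equals the induced relation R_{T_R} = {(s,t) : ∀b ∈ B, T_R(b)(s) ≤ b(t)}. -/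
/-- If for every t ∈ S there is b^t ∈ B such that for all s with
¬(s R t) one has ⨅{b^t(u) : s R u} ≰ b^t(t) and b^t(t) ≠ ⊤, then
R = R_{T_R} where T_R(b)(s) = ⨅{b(t) : s R t}. -/
theorem stmt7 {M S : Type*} [CompleteLattice M] (hM : (⊥ : M) ≠ ⊤) [Nonempty S]
    (R : S → S → Prop) (B : Set (S → M))
    (hB0 : (fun _ => (⊥ : M)) ∈ B) (hB1 : (fun _ => (⊤ : M)) ∈ B)
    (hyp : ∀ t : S, ∃ b ∈ B, ∀ s : S, ¬ R s t →
        ¬ ((⨅ u ∈ {u' | R s u'}, b u) ≤ b t) ∧ b t ≠ ⊤) :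
    ∀ s t : S, R s t ↔ (∀ b ∈ B, (⨅ u ∈ {u' | R s u'}, b u) ≤ b t) := by
  intro s t
  constructor
  · intro hst b hb
    exact biInf_le b hst
  · intro h
    by_contra hns
    obtain ⟨b, hb, hprop⟩ := hyp t
    exact (hprop s hns).1 (h b hb)
end

section
/- Let M be a non-trivial complete lattice, (S, R) a transition frame, A a bounded subposet of M^S, and P_R : A → M^S the map P_R(a)(t) = ⋁{ a(s) : s R t }. Suppose for every s ∈ S there exists a^s ∈ A such that for all t ∈ S with (s,t) ∉ R, one has ⋁{ a^s(u) : u R t } ≱ a^s(s) and a^s(s) ≠ 0. Then R equals the induced relation R^{P_R} = {(s,t) : ∀a ∈ A, a(s) ≤ P_R(a)(t)}. -/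
/-- If for every s ∈ S there is a^s ∈ A such that for all t with
¬(s R t) one has ⨆{a^s(u) : u R t} ≱ a^s(s) and a^s(s) ≠ ⊥, then
R = R^{P_R} where P_R(a)(t) = ⨆{a(s) : s R t}. -/
theorem stmt8 {M S : Type*} [CompleteLattice M] (hM : (⊥ : M) ≠ ⊤) [Nonempty S]
    (R : S → S → Prop) (A : Set (S → M))
    (hA0 : (fun _ => (⊥ : M)) ∈ A) (hA1 : (fun _ => (⊤ : M)) ∈ A)
    (hyp : ∀ s : S, ∃ a ∈ A, ∀ t : S, ¬ R s t →
        ¬ (a s ≤ (⨆ u ∈ {u' | R u' t}, a u)) ∧ a s ≠ ⊥) :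
    ∀ s t : S, R s t ↔ (∀ a ∈ A, a s ≤ (⨆ u ∈ {u' | R u' t}, a u)) := by
  intro s t
  constructor
  · intro h a _
    exact le_biSup a h
  · intro h
    by_contra hst
    obtain ⟨a, ha, hprop⟩ := hyp s
    exact (hprop t hst).1 (h a ha)
end

section
/- Let M be a non-trivial complete lattice, (S, R) a transition frame, and A, B bounded subposets of M^S. Let T_R : B → M^S and P_R : A → M^S be given by T_R(b)(s) = ⋀{ b(t) : s R t } and P_R(a)(t) = ⋁{ a(s) : s R t }. If R = R_{T_R} and T_R(B) ⊆ A, then R = R_{T_R} = R^{P_R}. -/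
/-- If R = R_{T_R} and T_R(B) ⊆ A, then R = R_{T_R} = R^{P_R}. -/
theorem stmt9 {M S : Type*} [CompleteLattice M] (hM : (⊥ : M) ≠ ⊤) [Nonempty S]
    (R : S → S → Prop) (A B : Set (S → M))
    (hA0 : (fun _ => (⊥ : M)) ∈ A) (hA1 : (fun _ => (⊤ : M)) ∈ A)
    (hB0 : (fun _ => (⊥ : M)) ∈ B) (hB1 : (fun _ => (⊤ : M)) ∈ B)
    (hRT : ∀ s t : S, R s t ↔ (∀ b ∈ B, (⨅ u ∈ {u' | R s u'}, b u) ≤ b t))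
    (hTB : ∀ b ∈ B, (fun s => ⨅ u ∈ {u' | R s u'}, b u) ∈ A) :
    (∀ s t : S, R s t ↔ (∀ b ∈ B, (⨅ u ∈ {u' | R s u'}, b u) ≤ b t)) ∧
      (∀ s t : S, R s t ↔ (∀ a ∈ A, a s ≤ (⨆ u ∈ {u' | R u' t}, a u))) := by
  refine ⟨hRT, fun s t => ⟨fun h a ha => le_biSup _ h, fun h => ?_⟩⟩
  rw [hRT]
  intro b hb
  have ha := hTB b hb
  have h1 := h _ ha
  refine h1.trans (iSup₂_le fun u hu => ?_)
  exact biInf_le _ hu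
end

section
/- Let M be a non-trivial complete lattice, (S, R) a transition frame, and B a bounded subposet of M^S such that {0,1}^S ⊆ B (i.e., B contains all functions from S to the two-element subset {⊥, ⊤} of M). Define T_R(b)(s) = ⋀{ b(t) : s R t } and P_R(b)(t) = ⋁{ b(s) : s R t } for b ∈ B. Then R = R^{P_R} = R_{T_R}, i.e., the relation R is recoverable from both transition functors. -/
/-- If B contains all {⊥,⊤}-valued functions, then
R = R^{P_R} = R_{T_R}, i.e. R is recoverable from both transition functors. -/
theorem stmt10 {M S : Type*} [CompleteLattice M] (hM : (⊥ : M) ≠ ⊤) [Nonempty S]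
    (R : S → S → Prop) (B : Set (S → M))
    (hB0 : (fun _ => (⊥ : M)) ∈ B) (hB1 : (fun _ => (⊤ : M)) ∈ B)
    (hfull : ∀ f : S → M, (∀ s, f s = ⊥ ∨ f s = ⊤) → f ∈ B) :
    (∀ s t : S, R s t ↔ (∀ b ∈ B, b s ≤ (⨆ u ∈ {u' | R u' t}, b u))) ∧
      (∀ s t : S, R s t ↔ (∀ b ∈ B, (⨅ u ∈ {u' | R s u'}, b u) ≤ b t)) := by
  classical
  constructor
  · intro s t
    constructor
    · intro hR b _
      exact le_biSup b hR
    · intro h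
      by_contra hns
      set f : S → M := fun u => if u = s then ⊤ else ⊥ with hf
      have hfB : f ∈ B := hfull f (fun u => by by_cases h : u = s <;> simp [hf, h])
      have := h f hfB
      have hfs : f s = ⊤ := by simp [hf]
      have hsup : (⨆ u ∈ {u' | R u' t}, f u) = ⊥ := by
        apply le_antisymm _ bot_le
        apply iSup₂_le
        intro u hu
        have : u ≠ s := fun h' => hns (h' ▸ hu)
        simp [hf, this]
      rw [hfs, hsup] at this
      exact hM (le_antisymm bot_le this)
  · intro s t
    constructor
    · intro hR b _
      exact biInf_le b hR
    · intro h
      by_contra hns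
      set f : S → M := fun u => if u = t then ⊥ else ⊤ with hf
      have hfB : f ∈ B := hfull f (fun u => by by_cases h : u = t <;> simp [hf, h])
      have := h f hfB
      have hft : f t = ⊥ := by simp [hf]
      have hinf : (⨅ u ∈ {u' | R s u'}, f u) = ⊤ := by
        apply le_antisymm le_top
        apply le_iInf₂
        intro u hu
        have : u ≠ t := fun h' => hns (h' ▸ hu)
        simp [hf, this]
      rw [hft, hinf] at this
      exact hM (le_antisymm bot_le this)
end

section
/- Let M be a non-trivial complete lattice, S and X non-empty sets, and B a bounded subposet of M^S. Let P = (P_x)_{x∈X} and T = (T_x)_{x∈X} with P_x, T_x : B → M^S order-preserving maps satisfying P_x(a) ≤ b iff a ≤ T_x(b) for all a, b ∈ B and x ∈ X. If P_x(B) ⊆ B and T_x(B) ⊆ B for all x ∈ X, then the labelled induced relations coincide: ⋃_{x∈X} {x} × R_{T_x} = ⋃_{x∈X} {x} × R^{P_x}, i.e., for every x, R_{T_x} = R^{P_x}. -/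
/-! The unit `a ≤ T (P a)` and the counit `P (T b) ≤ b` of the Galois connection, available because
`P` and `T` map `B` into itself, let each relation be obtained from the other by transitivity. -/

section InducedRel

variable {S M : Type*} [Preorder M]

/-- The relation `R_T` of the paper. -/
def inducedRel (B : Set (S → M)) (T : (S → M) → (S → M)) : Set (S × S) :=
  {p | ∀ b ∈ B, T b p.1 ≤ b p.2}

/-- The relation `R^P` of the paper. -/
def coinducedRel (B : Set (S → M)) (P : (S → M) → (S → M)) : Set (S × S) :=
  {p | ∀ a ∈ B, a p.1 ≤ P a p.2}

variable {B : Set (S → M)} {P T : (S → M) → (S → M)}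

theorem inducedRel_subset_coinducedRel (galois : ∀ a ∈ B, ∀ b ∈ B, P a ≤ b ↔ a ≤ T b)
    (hPB : ∀ a ∈ B, P a ∈ B) : inducedRel B T ⊆ coinducedRel B P := by
  rintro ⟨s, t⟩ h a ha
  have unit : a ≤ T (P a) := (galois a ha (P a) (hPB a ha)).mp le_rfl
  exact (unit s).trans (h (P a) (hPB a ha))

theorem coinducedRel_subset_inducedRel (galois : ∀ a ∈ B, ∀ b ∈ B, P a ≤ b ↔ a ≤ T b)
    (hTB : ∀ b ∈ B, T b ∈ B) : coinducedRel B P ⊆ inducedRel B T := by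
  rintro ⟨s, t⟩ h b hb
  have counit : P (T b) ≤ b := (galois (T b) (hTB b hb) b hb).mpr le_rfl
  exact (h (T b) (hTB b hb)).trans (counit t)

theorem inducedRel_eq_coinducedRel (galois : ∀ a ∈ B, ∀ b ∈ B, P a ≤ b ↔ a ≤ T b)
    (hPB : ∀ a ∈ B, P a ∈ B) (hTB : ∀ b ∈ B, T b ∈ B) :
    inducedRel B T = coinducedRel B P :=
  (inducedRel_subset_coinducedRel galois hPB).antisymm (coinducedRel_subset_inducedRel galois hTB)

end InducedRel

theorem stmt12_general {M S X : Type*} [CompleteLattice M]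
    (B : Set (S → M))
    (P T : X → (S → M) → (S → M))
    (galois : ∀ x, ∀ a ∈ B, ∀ b ∈ B, (P x a ≤ b ↔ a ≤ T x b))
    (hPB : ∀ x, ∀ a ∈ B, P x a ∈ B) (hTB : ∀ x, ∀ b ∈ B, T x b ∈ B) :
    ∀ x : X,
      {p : S × S | ∀ b ∈ B, T x b p.1 ≤ b p.2} =
        {p : S × S | ∀ a ∈ B, a p.1 ≤ P x a p.2} :=
  fun x => inducedRel_eq_coinducedRel (galois x) (hPB x) (hTB x)

/-- For families (P_x), (T_x) of order-preserving maps on B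
forming Galois pairs, if P_x(B) ⊆ B and T_x(B) ⊆ B for all x, then the labelled
induced relations coincide: for every x, R_{T_x} = R^{P_x}. -/
theorem stmt12 {M S X : Type*} [CompleteLattice M] (hM : (⊥ : M) ≠ ⊤)
    [Nonempty S] [Nonempty X]
    (B : Set (S → M))
    (hB0 : (fun _ => (⊥ : M)) ∈ B) (hB1 : (fun _ => (⊤ : M)) ∈ B)
    (P T : X → (S → M) → (S → M))
    (hP : ∀ x, ∀ a ∈ B, ∀ a' ∈ B, a ≤ a' → P x a ≤ P x a')
    (hT : ∀ x, ∀ b ∈ B, ∀ b' ∈ B, b ≤ b' → T x b ≤ T x b')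
    (galois : ∀ x, ∀ a ∈ B, ∀ b ∈ B, (P x a ≤ b ↔ a ≤ T x b))
    (hPB : ∀ x, ∀ a ∈ B, P x a ∈ B) (hTB : ∀ x, ∀ b ∈ B, T x b ∈ B) :
    ∀ x : X,
      {p : S × S | ∀ b ∈ B, T x b p.1 ≤ b p.2} =
        {p : S × S | ∀ a ∈ B, a p.1 ≤ P x a p.2} :=
  stmt12_general B P T galois hPB hTB
end

section
/- Let M be a non-trivial complete lattice, 𝒜 = (X, S, R) an automaton with R ⊆ X × S × S and fibers R_x, and B a bounded subposet of M^S with {0,1}^S ⊆ B. Define for each x ∈ X the functors T_{R_x}(b)(s) = ⋀{ b(t) : s R_x t } and P_{R_x}(b)(t) = ⋁{ b(s) : s R_x t } on B. Then for every x ∈ X, R_x = R_{T_{R_x}} = R^{P_{R_x}}; that is, the automaton 𝒜 is recoverable from both labelled transition functors. -/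
/-!
If `s R t` then `b t` is one of the values whose meet is `T_R(b)(s)`, so the inequality holds
for every `b`. Conversely, testing against the crisp indicator `b` of the successors of `s`
gives `T_R(b)(s) = ⊤`, hence `b t = ⊤`, which forces `s R t` because `⊥ ≠ ⊤`.
The statement for `P_R` is the order dual of the one for `T_R`, applied to the reversed relation.
-/

section CrispTests

variable {M S : Type*} [CompleteLattice M]

theorem rel_iff_forall_biInf_le (hM : (⊥ : M) ≠ ⊤) (r : S → S → Prop) {B : Set (S → M)}
    (hB : ∀ f : S → M, (∀ s, f s = ⊥ ∨ f s = ⊤) → f ∈ B) (s t : S) :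
    r s t ↔ ∀ b ∈ B, (⨅ u ∈ {u | r s u}, b u) ≤ b t := by
  classical
  refine ⟨fun h b _ => biInf_le b h, fun h => by_contra fun hst => hM ?_⟩
  set f : S → M := fun u => if r s u then ⊤ else ⊥
  have hfB : f ∈ B := hB f fun u => by by_cases hu : r s u <;> simp [f, hu]
  have hf_top : ⨅ u ∈ {u | r s u}, f u = ⊤ := by simp +contextual [f]
  have hft : ⊤ ≤ f t := hf_top ▸ h f hfB
  simpa [f, hst, eq_comm] using hft

theorem rel_iff_forall_le_biSup (hM : (⊥ : M) ≠ ⊤) (r : S → S → Prop) {B : Set (S → M)}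
    (hB : ∀ f : S → M, (∀ s, f s = ⊥ ∨ f s = ⊤) → f ∈ B) (s t : S) :
    r s t ↔ ∀ b ∈ B, b s ≤ ⨆ u ∈ {u | r u t}, b u :=
  rel_iff_forall_biInf_le (M := Mᵒᵈ) hM.symm (flip r) (B := B)
    (fun f hf => hB f fun s => (hf s).symm) t s

end CrispTests

theorem stmt13_general {M S X : Type*} [CompleteLattice M] (hM : (⊥ : M) ≠ ⊤)
    (R : X → S → S → Prop) (B : Set (S → M))
    (hfull : ∀ f : S → M, (∀ s, f s = ⊥ ∨ f s = ⊤) → f ∈ B) :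
    ∀ x : X,
      (∀ s t : S, R x s t ↔ (∀ b ∈ B, (⨅ u ∈ {u' | R x s u'}, b u) ≤ b t)) ∧
      (∀ s t : S, R x s t ↔ (∀ b ∈ B, b s ≤ (⨆ u ∈ {u' | R x u' t}, b u))) :=
  fun x => ⟨rel_iff_forall_biInf_le hM (R x) hfull, rel_iff_forall_le_biSup hM (R x) hfull⟩

/-- For an automaton (X,S,R) and B a bounded subposet of M^S with
{0,1}^S ⊆ B, for every x ∈ X the fiber R_x equals both induced relations:
R_x = R_{T_{R_x}} = R^{P_{R_x}}. -/
theorem stmt13 {M S X : Type*} [CompleteLattice M] (hM : (⊥ : M) ≠ ⊤)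
    [Nonempty S] [Nonempty X]
    (R : X → S → S → Prop) (B : Set (S → M))
    (hB0 : (fun _ => (⊥ : M)) ∈ B) (hB1 : (fun _ => (⊤ : M)) ∈ B)
    (hfull : ∀ f : S → M, (∀ s, f s = ⊥ ∨ f s = ⊤) → f ∈ B) :
    ∀ x : X,
      (∀ s t : S, R x s t ↔ (∀ b ∈ B, (⨅ u ∈ {u' | R x s u'}, b u) ≤ b t)) ∧
      (∀ s t : S, R x s t ↔ (∀ b ∈ B, b s ≤ (⨆ u ∈ {u' | R x u' t}, b u))) :=
  stmt13_general hM R B hfull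
end

section
/- Let B be a bounded poset embedded as a bounded subposet of 2^{S_B}, where S_B is the set of morphisms of bounded posets from B to the two-element bounded poset 2, via b(s) = s(b). Let C ⊆ B be a subposet containing 1, let X be a non-empty set, and let T = (T_x)_{x∈X} with T_x : C → 2^{S_B} order-preserving maps satisfying T_x(1) = 1. Define R_{T_x} = {(s,t) ∈ S_B × S_B : ∀c ∈ C, T_x(c)(s) ≤ c(t)} and let T_{R_{T_x}}(b)(s) = ⋀{ b(t) : s R_{T_x} t } (infimum in 2, empty infimum = 1). Then for all b ∈ C and all x ∈ X: T_x(b) = T_{R_{T_x}}(b). -/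
/-- Let B be a bounded poset embedded into 2^{S_B} by evaluation,
where S_B is the set of bounded-poset morphisms B → 2 (2 modelled as Prop).
Let C ⊆ B contain 1, and T_x : C → 2^{S_B} order-preserving with T_x(1) = 1.
Then T_x(b) = T_{R_{T_x}}(b) for all b ∈ C and x ∈ X, where
R_{T_x} = {(s,t) : ∀ c ∈ C, T_x(c)(s) ≤ c(t)} and
T_{R_{T_x}}(b)(s) = ⨅ { b(t) : s R_{T_x} t }. -/
theorem stmt15 {B X : Type*} [PartialOrder B] [BoundedOrder B] [Nonempty X]
    (C : Set B) (hC1 : (⊤ : B) ∈ C)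
    (T : X → B → ({s : B → Prop // Monotone s ∧ s ⊥ = (⊥ : Prop) ∧ s ⊤ = (⊤ : Prop)} → Prop))
    (hTmono : ∀ x, ∀ c ∈ C, ∀ d ∈ C, c ≤ d → T x c ≤ T x d)
    (hTtop : ∀ x, T x ⊤ = fun _ => (⊤ : Prop)) :
    ∀ b ∈ C, ∀ x : X,
      T x b = fun s => ⨅ t ∈ {t' : {s : B → Prop // Monotone s ∧ s ⊥ = (⊥ : Prop) ∧ s ⊤ = (⊤ : Prop)} |
        ∀ c ∈ C, T x c s ≤ t'.1 c}, t.1 b := by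
  intro b hb x
  funext s
  simp only [Set.mem_setOf_eq, iInf_Prop_eq, eq_iff_iff]
  constructor
  · intro h t ht
    exact ht b hb h
  · intro h
    by_cases hbot : ∃ c ∈ C, c ≤ (⊥ : B) ∧ T x c s
    · obtain ⟨c, hc, hcb, hcs⟩ := hbot
      exact hTmono x c hc b hb (hcb.trans bot_le) s hcs
    · -- construct the witness t
      have hmono : Monotone (fun a : B => ∃ c ∈ C, c ≤ a ∧ T x c s) := by
        intro a a' haa' ⟨c, hc, hca, hcs⟩
        exact ⟨c, hc, hca.trans haa', hcs⟩
      have hbotEq : (∃ c ∈ C, c ≤ (⊥ : B) ∧ T x c s) = (⊥ : Prop) := by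
        simp only [Prop.bot_eq_false, eq_iff_iff, iff_false]
        exact hbot
      have htopEq : (∃ c ∈ C, c ≤ (⊤ : B) ∧ T x c s) = (⊤ : Prop) := by
        simp only [Prop.top_eq_true, eq_iff_iff, iff_true]
        refine ⟨⊤, hC1, le_rfl, ?_⟩
        rw [hTtop x]
        trivial
      set t : {s : B → Prop // Monotone s ∧ s ⊥ = (⊥ : Prop) ∧ s ⊤ = (⊤ : Prop)} :=
        ⟨fun a => ∃ c ∈ C, c ≤ a ∧ T x c s, hmono, hbotEq, htopEq⟩ with ht
      have hrel : ∀ c ∈ C, T x c s ≤ t.1 c := fun c hc hcs => ⟨c, hc, le_rfl, hcs⟩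
      obtain ⟨c, hc, hcb, hcs⟩ := h t hrel
      exact hTmono x c hc b hb hcb s hcs
end

section
/- Let B be a Boolean algebra, identified with a sub-Boolean algebra of 2^{S_B} where S_B is the set of Boolean algebra homomorphisms from B to the two-element Boolean algebra 2, via evaluation b(s) = s(b). Let C ⊆ B contain 1 and be closed under binary meets, let X be a non-empty set, and let T = (T_x)_{x∈X} with T_x : C → 2^{S_B} maps preserving finite meets (in particular T_x(1) = 1 and T_x(c ∧ d) = T_x(c) ∧ T_x(d)). Define R_{T_x} = {(s,t) ∈ S_B × S_B : ∀c ∈ C, T_x(c)(s) ≤ c(t)} and T_{R_{T_x}}(b)(s) = ⋀{ b(t) : s R_{T_x} t }. Then for all b ∈ C and all x ∈ X: T_x(b) = T_{R_{T_x}}(b). -/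
/-! The inequality `T x b ≤ T_{R_{T_x}} b` is immediate from the definition of `R_{T_x}`. For the
converse, suppose `T x b s` fails. The elements `c ∈ C` with `T x c s` form a meet-closed set
containing `⊤`, and since `T x` is monotone on `C` none of them lies below `b`. By the prime ideal
theorem there is a homomorphism `t : B → 2` that is true on all of them but false at `b`; then
`s R_{T_x} t` and `¬ t b`, so the infimum defining `T_{R_{T_x}} b s` fails as well. -/

namespace Order.Ideal

variable {P : Type*} [Lattice P] [BoundedOrder P]

def IsPrime.toBoundedLatticeHomProp {J : Ideal P} (hJ : J.IsPrime) : BoundedLatticeHom P Prop where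
  toFun a := a ∉ J
  map_sup' a b := propext <| by simp only [sup_mem_iff, not_and_or]; rfl
  map_inf' a b := propext
    ⟨fun h => ⟨fun ha => h (J.lower inf_le_left ha), fun hb => h (J.lower inf_le_right hb)⟩,
      fun ⟨ha, hb⟩ hab => (hJ.mem_or_mem hab).elim ha hb⟩
  map_top' := propext ⟨fun _ => trivial, fun _ => hJ.top_notMem⟩
  map_bot' := propext ⟨fun h => h J.bot_mem, False.elim⟩

end Order.Ideal

theorem InfClosed.isPFilter_upperClosure {α : Type*} [SemilatticeInf α] {S : Set α}
    (hS : InfClosed S) (hSne : S.Nonempty) : Order.IsPFilter (upperClosure S : Set α) := by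
  refine .of_def (hSne.mono subset_upperClosure) ?_ fun hxy hx => (upperClosure S).upper hxy hx
  rintro x ⟨a, ha, hax⟩ y ⟨b, hb, hby⟩
  exact ⟨a ⊓ b, ⟨a ⊓ b, hS ha hb, le_rfl⟩, inf_le_left.trans hax, inf_le_right.trans hby⟩

theorem exists_boundedLatticeHom_prop_separating {α : Type*} [DistribLattice α] [BoundedOrder α]
    {S : Set α} (hS : InfClosed S) (hSne : S.Nonempty) {b : α} (hb : ∀ a ∈ S, ¬a ≤ b) :
    ∃ t : BoundedLatticeHom α Prop, (∀ a ∈ S, t a) ∧ ¬t b := by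
  let F := (hS.isPFilter_upperClosure hSne).toPFilter
  have hFb : Disjoint (F : Set α) (Order.Ideal.principal b : Set α) :=
    Set.disjoint_left.2 fun _ ⟨a, ha, hax⟩ hxb => hb a ha (hax.trans hxb)
  obtain ⟨J, hJ, hbJ, hFJ⟩ := DistribLattice.prime_ideal_of_disjoint_filter_ideal hFb
  refine ⟨hJ.toBoundedLatticeHomProp, fun a ha => ?_, fun hb' => hb' (hbJ le_rfl)⟩
  exact Set.disjoint_left.1 hFJ (subset_upperClosure ha : a ∈ F)

theorem stmt16_general {B X : Type*} [BooleanAlgebra B]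
    (C : Set B) (hC1 : (⊤ : B) ∈ C) (hCmeet : ∀ c ∈ C, ∀ d ∈ C, c ⊓ d ∈ C)
    (T : X → B → (BoundedLatticeHom B Prop → Prop))
    (hTtop : ∀ x, T x ⊤ = (⊤ : BoundedLatticeHom B Prop → Prop))
    (hTmeet : ∀ x, ∀ c ∈ C, ∀ d ∈ C, T x (c ⊓ d) = T x c ⊓ T x d) :
    ∀ b ∈ C, ∀ x : X,
      T x b = fun s => ⨅ t ∈ {t' : BoundedLatticeHom B Prop |
        ∀ c ∈ C, T x c s ≤ t' c}, t b := by
  intro b hb x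
  funext s
  simp only [Set.mem_ofPred_eq, iInf_Prop_eq]
  refine propext ⟨fun hbs t ht => ht b hb hbs, fun h => ?_⟩
  by_contra hbs
  have hInfClosed : InfClosed {c | c ∈ C ∧ T x c s} := fun c ⟨hc, hcs⟩ d ⟨hd, hds⟩ =>
    ⟨hCmeet c hc d hd, by rw [hTmeet x c hc d hd]; exact ⟨hcs, hds⟩⟩
  have hNotBelow : ∀ c ∈ {c | c ∈ C ∧ T x c s}, ¬c ≤ b := fun c ⟨hc, hcs⟩ hcb => by
    have hTc : T x c = T x c ⊓ T x b := by rw [← hTmeet x c hc b hb, inf_eq_left.2 hcb]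
    exact hbs (congrFun hTc s ▸ hcs).2
  obtain ⟨t, htS, htb⟩ := exists_boundedLatticeHom_prop_separating hInfClosed
    ⟨⊤, hC1, by rw [hTtop]; trivial⟩ hNotBelow
  exact htb (h t fun c hc hcs => htS c ⟨hc, hcs⟩)

/-- Let B be a Boolean algebra, identified with a sub-Boolean
algebra of 2^{S_B} (2 modelled as Prop) where S_B is the set of Boolean algebra
homomorphisms B → 2 (bounded lattice homomorphisms), via evaluation. Let C ⊆ B
contain 1 and be closed under binary meets, and let T_x : C → 2^{S_B} preserve
finite meets (T_x(1) = 1 and T_x(c ⊓ d) = T_x(c) ⊓ T_x(d)). Then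
T_x(b) = T_{R_{T_x}}(b) for all b ∈ C and x ∈ X. -/
theorem stmt16 {B X : Type*} [BooleanAlgebra B] [Nonempty X]
    (C : Set B) (hC1 : (⊤ : B) ∈ C) (hCmeet : ∀ c ∈ C, ∀ d ∈ C, c ⊓ d ∈ C)
    (T : X → B → (BoundedLatticeHom B Prop → Prop))
    (hTtop : ∀ x, T x ⊤ = (⊤ : BoundedLatticeHom B Prop → Prop))
    (hTmeet : ∀ x, ∀ c ∈ C, ∀ d ∈ C, T x (c ⊓ d) = T x c ⊓ T x d) :
    ∀ b ∈ C, ∀ x : X,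
      T x b = fun s => ⨅ t ∈ {t' : BoundedLatticeHom B Prop |
        ∀ c ∈ C, T x c s ≤ t' c}, t b :=
  stmt16_general C hC1 hCmeet T hTtop hTmeet
end
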